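/- Assume (V0′), (F0), (F1) and (WN). Then for every u ∈ N⁰: Φ(u) ≥ Φ(tu + w) + ½‖w‖₀² − ½∫_{ℝᴺ} V₁(x)w² dx for all t ≥ 0 and all w ∈ E^{ℱ−}. -/

import Mathlib

open MeasureTheory Filter Topology RealInnerProductSpace

/-- `Fint f x t = F(x,t) = ∫₀ᵗ f(x,s) ds`. -/
noncomputable def Fint {N : ℕ} (f : EuclideanSpace ℝ (Fin N) → ℝ → ℝ)
    (x : EuclideanSpace ℝ (Fin N)) (t : ℝ) : ℝ :=
  ∫ s in (0:ℝ)..t, f x s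

/-!
On the Nehari–Pankov set, `Φ'(u)u = 0` and `Φ'(u)w = 0` turn the quadratic part of `Φ(tu + w)`
into `½(t² ∫ f(u)u + 2t ∫ f(u)w) + ½Q(w)`, and on `E^{ℱ-}` the form is
`Q(w) = -‖w‖₀² + ∫ V₁ w²`. What remains is the integral of the pointwise inequality
`f(u)((t² - 1)/2 · u + t w) + F(u) ≤ F(tu + w)`, valid for every continuous `g = f(x, ·)` with
`g(s)/|s|` nondecreasing on both half-lines and `g(s) = o(s)` at `0`. The reflection
`g ↦ -g(-·)` reduces it to `s > 0`. There, with `h = g(s)/s ≥ 0`, the function `g` lies below the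
line `hτ` on `[0, s]` and above it beyond `s`, so `∫ₛʳ (g - hτ) ≥ -hσ²/2` for `r = ts + σ`,
which is the inequality once `r² = t²s² + 2tsσ + σ²` is expanded.
-/

open Set Asymptotics

theorem intervalIntegral_nonneg_of_sign_change {φ : ℝ → ℝ} {a s r : ℝ}
    (hle : ∀ τ ∈ Icc a s, φ τ ≤ 0) (hge : ∀ τ, s ≤ τ → 0 ≤ φ τ) (har : a ≤ r) :
    0 ≤ ∫ τ in s..r, φ τ := by
  rcases le_total s r with hsr | hrs
  · exact intervalIntegral.integral_nonneg hsr fun τ hτ => hge τ hτ.1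
  · rw [intervalIntegral.integral_symm, ← intervalIntegral.integral_neg]
    exact intervalIntegral.integral_nonneg hrs fun τ hτ =>
      neg_nonneg.2 (hle τ ⟨har.trans hτ.1, hτ.2⟩)

section Superlinear

variable {g : ℝ → ℝ}

theorem monotoneOn_neg_comp_neg (hneg : MonotoneOn (fun τ => g τ / |τ|) (Iio 0)) :
    MonotoneOn (fun τ => -g (-τ) / |τ|) (Ioi 0) := by
  intro a ha b hb hab
  have h := hneg (a := -b) (b := -a) (mem_Iio.2 (neg_neg_of_pos (mem_Ioi.1 hb)))
    (mem_Iio.2 (neg_neg_of_pos (mem_Ioi.1 ha))) (neg_le_neg hab)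
  simp only [abs_neg] at h
  simp only [neg_div]
  linarith

theorem isLittleO_neg_comp_neg (hsmall : g =o[𝓝 0] id) :
    (fun τ => -g (-τ)) =o[𝓝 0] id := by
  have h := (hsmall.comp_tendsto (continuous_neg.tendsto' (0 : ℝ) 0 neg_zero)).neg_left
  exact isLittleO_neg_right.1 h

theorem intervalIntegral_neg_comp_neg (c : ℝ) :
    ∫ τ in (0 : ℝ)..c, -g (-τ) = ∫ τ in (0 : ℝ)..-c, g τ := by
  rw [intervalIntegral.integral_neg, intervalIntegral.integral_comp_neg, neg_zero,
    intervalIntegral.integral_symm, neg_neg]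

theorem div_abs_nonneg_of_monotoneOn (hpos : MonotoneOn (fun τ => g τ / |τ|) (Ioi 0))
    (hsmall : g =o[𝓝 0] id) {τ : ℝ} (hτ : 0 < τ) : 0 ≤ g τ / |τ| := by
  have hlim : Tendsto (fun τ => g τ / |τ|) (𝓝[>] 0) (𝓝 0) := by
    simpa only [Real.norm_eq_abs, id] using
      (hsmall.mono nhdsWithin_le_nhds).norm_right.tendsto_div_nhds_zero
  refine le_of_tendsto hlim ?_
  filter_upwards [Ioc_mem_nhdsGT hτ] with τ' hτ'
  exact hpos hτ'.1 hτ hτ'.2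

theorem mul_nonneg_of_monotoneOn_div_abs (hpos : MonotoneOn (fun τ => g τ / |τ|) (Ioi 0))
    (hneg : MonotoneOn (fun τ => g τ / |τ|) (Iio 0)) (hsmall : g =o[𝓝 0] id) (τ : ℝ) :
    0 ≤ τ * g τ := by
  rcases lt_trichotomy τ 0 with hτ | rfl | hτ
  · have h := div_abs_nonneg_of_monotoneOn (monotoneOn_neg_comp_neg hneg)
      (isLittleO_neg_comp_neg hsmall) (neg_pos.2 hτ)
    rw [neg_neg, le_div_iff₀ (abs_pos.2 (neg_ne_zero.2 hτ.ne)), zero_mul, neg_nonneg] at h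
    exact mul_nonneg_of_nonpos_of_nonpos hτ.le h
  · simp
  · have h := div_abs_nonneg_of_monotoneOn hpos hsmall hτ
    rw [le_div_iff₀ (abs_pos.2 hτ.ne'), zero_mul] at h
    exact mul_nonneg hτ.le h

theorem intervalIntegral_nonneg_of_mul_nonneg (hg0 : g 0 = 0) (hsign : ∀ τ, 0 ≤ τ * g τ)
    (r : ℝ) : 0 ≤ ∫ τ in (0 : ℝ)..r, g τ := by
  have hnonneg : ∀ τ, 0 ≤ τ → 0 ≤ g τ := fun τ hτ => by
    rcases hτ.eq_or_lt with rfl | hτ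
    · exact hg0.ge
    · exact nonneg_of_mul_nonneg_right (hsign τ) hτ
  refine intervalIntegral_nonneg_of_sign_change (a := r) (fun τ hτ => ?_) hnonneg le_rfl
  rcases hτ.2.eq_or_lt with rfl | hτ'
  · exact hg0.le
  · nlinarith [hsign τ]

theorem intervalIntegral_sub_mul_id (hg : Continuous g) (h a b : ℝ) :
    ∫ τ in a..b, (g τ - h * τ) =
      (∫ τ in (0 : ℝ)..b, g τ) - (∫ τ in (0 : ℝ)..a, g τ) - h * (b ^ 2 - a ^ 2) / 2 := by
  rw [intervalIntegral.integral_sub (hg.intervalIntegrable a b)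
    ((continuous_const_mul h).intervalIntegrable a b),
    intervalIntegral.integral_const_mul, integral_id,
    ← intervalIntegral.integral_interval_sub_left (hg.intervalIntegrable 0 b)
      (hg.intervalIntegrable 0 a)]
  ring

theorem primitive_affine_inequality_of_pos (hg : Continuous g)
    (hpos : MonotoneOn (fun τ => g τ / |τ|) (Ioi 0)) (hg0 : g 0 = 0)
    (hsign : ∀ τ, 0 ≤ τ * g τ) {s t : ℝ} (hs : 0 < s) (ht : 0 ≤ t) (σ : ℝ) :
    (t ^ 2 - 1) / 2 * (g s * s) + t * (g s * σ) + ∫ τ in (0 : ℝ)..s, g τ ≤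
      ∫ τ in (0 : ℝ)..t * s + σ, g τ := by
  obtain ⟨h, hgs⟩ : ∃ h, g s = h * s := ⟨g s / s, (div_mul_cancel₀ _ hs.ne').symm⟩
  have hslope : g s / |s| = h := by rw [hgs, abs_of_pos hs, mul_div_cancel_right₀ _ hs.ne']
  have hh : 0 ≤ h := hslope ▸ div_nonneg (nonneg_of_mul_nonneg_right (hsign s) hs) (abs_nonneg s)
  have below : ∀ τ ∈ Icc 0 s, g τ - h * τ ≤ 0 := by
    rintro τ ⟨hτ0, hτs⟩
    rcases hτ0.eq_or_lt with rfl | hτ0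
    · simp [hg0]
    · have : g τ / |τ| ≤ g s / |s| := hpos hτ0 hs hτs
      rw [hslope, abs_of_pos hτ0, div_le_iff₀ hτ0] at this
      linarith
  have above : ∀ τ, s ≤ τ → 0 ≤ g τ - h * τ := by
    intro τ hsτ
    have hτ := hs.trans_le hsτ
    have : g s / |s| ≤ g τ / |τ| := hpos hs hτ hsτ
    rw [hslope, abs_of_pos hτ, le_div_iff₀ hτ] at this
    linarith
  have key : -(h * σ ^ 2) / 2 ≤ ∫ τ in s..t * s + σ, (g τ - h * τ) := by
    rcases le_total 0 (t * s + σ) with hr | hr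
    · have := intervalIntegral_nonneg_of_sign_change below above hr
      linarith [mul_nonneg hh (sq_nonneg σ)]
    · have hφ : Continuous fun τ => g τ - h * τ := by fun_prop
      rw [← intervalIntegral.integral_add_adjacent_intervals (b := 0) (hφ.intervalIntegrable _ _)
        (hφ.intervalIntegrable _ _), intervalIntegral_sub_mul_id hg h 0]
      have h₁ := intervalIntegral_nonneg_of_sign_change below above le_rfl
      have h₂ := intervalIntegral_nonneg_of_mul_nonneg hg0 hsign (t * s + σ)
      have h₃ : (t * s + σ) ^ 2 ≤ σ ^ 2 := by nlinarith [mul_nonneg ht hs.le]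
      simp only [intervalIntegral.integral_same]
      linarith [mul_le_mul_of_nonneg_left h₃ hh]
  rw [intervalIntegral_sub_mul_id hg h] at key
  rw [hgs]
  linarith

theorem primitive_affine_inequality (hg : Continuous g)
    (hpos : MonotoneOn (fun τ => g τ / |τ|) (Ioi 0))
    (hneg : MonotoneOn (fun τ => g τ / |τ|) (Iio 0)) (hsmall : g =o[𝓝 0] id)
    {t : ℝ} (ht : 0 ≤ t) (s σ : ℝ) :
    (t ^ 2 - 1) / 2 * (g s * s) + t * (g s * σ) + ∫ τ in (0 : ℝ)..s, g τ ≤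
      ∫ τ in (0 : ℝ)..t * s + σ, g τ := by
  have hg0 : g 0 = 0 := hsmall.isBigO.eq_zero_imp.self_of_nhds rfl
  have hsign := mul_nonneg_of_monotoneOn_div_abs hpos hneg hsmall
  rcases lt_trichotomy s 0 with hs | rfl | hs
  · have h := primitive_affine_inequality_of_pos (by fun_prop)
      (monotoneOn_neg_comp_neg hneg) (by simp [hg0]) (fun τ => by linarith [hsign (-τ)])
      (neg_pos.2 hs) ht (-σ)
    rw [intervalIntegral_neg_comp_neg, intervalIntegral_neg_comp_neg] at h
    convert h using 2 <;> ring_nf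
  · simpa [hg0] using intervalIntegral_nonneg_of_mul_nonneg hg0 hsign σ
  · exact primitive_affine_inequality_of_pos hg hpos hg0 hsign hs ht σ

end Superlinear

section QuadraticForm

variable {X E F : Type*} [AddCommGroup E] [Module ℝ E] [NormedAddCommGroup F]
  [InnerProductSpace ℝ F]

def formDensity (grad : E →ₗ[ℝ] X → F) (ι : E →ₗ[ℝ] X → ℝ) (V : X → ℝ) (a b : E) (x : X) : ℝ :=
  ⟪grad a x, grad b x⟫ + V x * (ι a x * ι b x)

variable {grad : E →ₗ[ℝ] X → F} {ι : E →ₗ[ℝ] X → ℝ} {V : X → ℝ}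

theorem formDensity_self (a : E) (x : X) :
    formDensity grad ι V a a x = ‖grad a x‖ ^ 2 + V x * ι a x ^ 2 := by
  simp only [formDensity, real_inner_self_eq_norm_sq]
  ring

theorem formDensity_polarization (a b : E) (x : X) :
    formDensity grad ι V a b x =
      (formDensity grad ι V (a + b) (a + b) x - formDensity grad ι V (a - b) (a - b) x) / 4 := by
  simp only [formDensity, map_add, map_sub, Pi.add_apply, Pi.sub_apply, real_inner_add_add_self,
    real_inner_sub_sub_self]
  ring

theorem formDensity_smul_add_self (t : ℝ) (u w : E) (x : X) :
    formDensity grad ι V (t • u + w) (t • u + w) x =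
      t ^ 2 * formDensity grad ι V u u x + 2 * t * formDensity grad ι V u w x +
        formDensity grad ι V w w x := by
  simp only [formDensity, map_add, map_smul, Pi.add_apply, Pi.smul_apply, smul_eq_mul,
    real_inner_add_add_self, real_inner_smul_left, real_inner_smul_right]
  ring

variable [MeasurableSpace X] {μ : Measure X}

theorem integrable_formDensity (hgrad : ∀ a, MemLp (fun x => ‖grad a x‖) 2 μ)
    (hV : ∀ a, Integrable (fun x => V x * ι a x ^ 2) μ) (a b : E) :
    Integrable (formDensity grad ι V a b) μ := by
  have hself : ∀ c, Integrable (formDensity grad ι V c c) μ := fun c => by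
    rw [funext (formDensity_self c)]
    exact (hgrad c).integrable_sq.add (hV c)
  rw [funext (formDensity_polarization a b)]
  exact ((hself _).sub (hself _)).div_const 4

theorem integral_formDensity_smul_add_self (hgrad : ∀ a, MemLp (fun x => ‖grad a x‖) 2 μ)
    (hV : ∀ a, Integrable (fun x => V x * ι a x ^ 2) μ) (t : ℝ) (u w : E) :
    ∫ x, formDensity grad ι V (t • u + w) (t • u + w) x ∂μ =
      t ^ 2 * ∫ x, formDensity grad ι V u u x ∂μ + 2 * t * ∫ x, formDensity grad ι V u w x ∂μ +
        ∫ x, formDensity grad ι V w w x ∂μ := by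
  have hq := integrable_formDensity hgrad hV
  have huu : Integrable (fun x => t ^ 2 * formDensity grad ι V u u x) μ := (hq u u).const_mul _
  have huw : Integrable (fun x => 2 * t * formDensity grad ι V u w x) μ := (hq u w).const_mul _
  have hsum : Integrable (fun x => t ^ 2 * formDensity grad ι V u u x +
      2 * t * formDensity grad ι V u w x) μ := huu.add huw
  simp only [formDensity_smul_add_self]
  rw [integral_add hsum (hq w w), integral_add huu huw, integral_const_mul,
    integral_const_mul]

theorem integral_formDensity_add_potential {V₀ V₁ : X → ℝ} {a : E}
    (ha : Integrable (formDensity grad ι (fun x => V₀ x + V₁ x) a a) μ)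
    (ha₁ : Integrable (fun x => V₁ x * ι a x ^ 2) μ) :
    ∫ x, formDensity grad ι (fun x => V₀ x + V₁ x) a a x ∂μ =
      (∫ x, formDensity grad ι V₀ a a x ∂μ) + ∫ x, V₁ x * ι a x ^ 2 ∂μ := by
  have hsplit : formDensity grad ι (fun x => V₀ x + V₁ x) a a =
      fun x => formDensity grad ι V₀ a a x + V₁ x * ι a x ^ 2 := by
    ext x
    simp only [formDensity_self]
    ring
  rw [hsplit] at ha ⊢
  exact integral_add ((integrable_add_iff_integrable_left' ha₁).1 ha) ha₁

end QuadraticForm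

theorem integral_primitive_affine_le {X : Type*} [MeasurableSpace X] {μ : Measure X}
    {f : X → ℝ → ℝ} (hf : ∀ x, Continuous (f x))
    (hpos : ∀ x, MonotoneOn (fun τ => f x τ / |τ|) (Ioi 0))
    (hneg : ∀ x, MonotoneOn (fun τ => f x τ / |τ|) (Iio 0)) (hsmall : ∀ x, f x =o[𝓝 0] id)
    {a b : X → ℝ} {t : ℝ} (ht : 0 ≤ t)
    (haa : Integrable (fun x => f x (a x) * a x) μ) (hab : Integrable (fun x => f x (a x) * b x) μ)
    (hFa : Integrable (fun x => ∫ τ in (0 : ℝ)..a x, f x τ) μ)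
    (hFab : Integrable (fun x => ∫ τ in (0 : ℝ)..t * a x + b x, f x τ) μ) :
    (t ^ 2 - 1) / 2 * ∫ x, f x (a x) * a x ∂μ + t * ∫ x, f x (a x) * b x ∂μ +
        ∫ x, (∫ τ in (0 : ℝ)..a x, f x τ) ∂μ ≤
      ∫ x, (∫ τ in (0 : ℝ)..t * a x + b x, f x τ) ∂μ := by
  have h₁ : Integrable (fun x => (t ^ 2 - 1) / 2 * (f x (a x) * a x)) μ := haa.const_mul _
  have h₂ : Integrable (fun x => t * (f x (a x) * b x)) μ := hab.const_mul _
  have h₁₂ : Integrable (fun x => (t ^ 2 - 1) / 2 * (f x (a x) * a x) + t * (f x (a x) * b x)) μ :=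
    h₁.add h₂
  rw [← integral_const_mul, ← integral_const_mul, ← integral_add h₁ h₂, ← integral_add h₁₂ hFa]
  exact integral_mono (h₁₂.add hFa) hFab fun x =>
    primitive_affine_inequality (hf x) (hpos x) (hneg x) (hsmall x) ht (a x) (b x)

theorem isLittleO_id_of_forall_abs_le {X : Type*} {f : X → ℝ → ℝ}
    (hf : ∀ ε > 0, ∃ δ > 0, ∀ x t, |t| ≤ δ → |f x t| ≤ ε * |t|) (x : X) : f x =o[𝓝 0] id :=
  isLittleO_iff.2 fun ε hε => by
    obtain ⟨δ, hδ, hfδ⟩ := hf ε hε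
    filter_upwards [Metric.closedBall_mem_nhds (0 : ℝ) hδ] with τ hτ
    simpa using hfδ x τ (by simpa using hτ)

theorem energy_inequality_on_NehariPankov_general
    {E : Type*} [NormedAddCommGroup E] [InnerProductSpace ℝ E]
    {N : ℕ}
    -- `E = H¹(ℝᴺ)`, realized as a Hilbert space of functions on `ℝᴺ` via `ι`,
    -- with (weak) gradient `grad`
    (ι : E →ₗ[ℝ] (EuclideanSpace ℝ (Fin N) → ℝ))
    (grad : E →ₗ[ℝ] (EuclideanSpace ℝ (Fin N) → EuclideanSpace ℝ (Fin N)))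
    (hmemg : ∀ u : E, MemLp (fun x => ‖grad u x‖) 2 (volume : Measure (EuclideanSpace ℝ (Fin N))))
    -- the spectral decomposition of `E` into the negative and positive spectral
    -- subspaces of the Schrödinger operator, with the associated projections
    (Em : Submodule ℝ E)
    (Pm Pp : E →L[ℝ] E)
    (hPsum : ∀ u, Pm u + Pp u = u)
    (hPmId : ∀ u ∈ Em, Pm u = u)
    -- (V0'): `V = V₀ + V₁`, `V₀` continuous and bounded, `V₁` continuous vanishing
    -- at infinity; the norm `‖·‖₀` of `E` is the form norm of `A₀ = -Δ + V₀`, whose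
    -- quadratic form is positive on `Ep = E^{ℱ+}` and negative on `Em = E^{ℱ-}`
    (V₀ V₁ : EuclideanSpace ℝ (Fin N) → ℝ)
    (hform : ∀ u : E,
      (∫ x, (‖grad u x‖ ^ 2 + V₀ x * (ι u x) ^ 2)) = ‖Pp u‖ ^ 2 - ‖Pm u‖ ^ 2)
    -- (F0) and (F1)
    (f : EuclideanSpace ℝ (Fin N) → ℝ → ℝ)
    (hfc : Continuous (Function.uncurry f))
    (hF1 : ∀ ε > 0, ∃ δ > 0, ∀ x t, |t| ≤ δ → |f x t| ≤ ε * |t|)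
    -- (WN): `t ↦ f(x,t)/|t|` is nondecreasing on `(-∞,0)` and on `(0,∞)`
    (hWN : ∀ (x : EuclideanSpace ℝ (Fin N)) (s₁ s₂ : ℝ),
      s₁ ≤ s₂ → (s₂ < 0 ∨ 0 < s₁) → f x s₁ / |s₁| ≤ f x s₂ / |s₂|)
    -- the energy functional `Φ` and its derivative `Φ'`
    (Φ : E → ℝ) (Φ' : E → E →L[ℝ] ℝ)
    (hΦ : ∀ u, Φ u = (1/2) * (∫ x, (‖grad u x‖ ^ 2 + (V₀ x + V₁ x) * (ι u x) ^ 2))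
        - ∫ x, Fint f x (ι u x))
    (hΦ'eq : ∀ u v, Φ' u v =
      (∫ x, (⟪grad u x, grad v x⟫ + (V₀ x + V₁ x) * (ι u x * ι v x)))
        - ∫ x, f x (ι u x) * ι v x)
    (hintF : ∀ u : E, Integrable (fun x => Fint f x (ι u x)))
    (hintV : ∀ u : E, Integrable (fun x => (V₀ x + V₁ x) * (ι u x) ^ 2))
    (hintf : ∀ u v : E, Integrable (fun x => f x (ι u x) * ι v x))
    (hintV₁ : ∀ u : E, Integrable (fun x => V₁ x * (ι u x) ^ 2))
 :
    ∀ u ∈ {u : E | u ∉ Em ∧ Φ' u u = 0 ∧ ∀ v ∈ Em, Φ' u v = 0},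
      ∀ (t : ℝ) (w : E), 0 ≤ t → w ∈ Em →
        Φ (t • u + w) + (1/2) * ‖w‖ ^ 2 - (1/2) * (∫ x, V₁ x * (ι w x) ^ 2) ≤ Φ u := by
  rintro u ⟨-, huu, huEm⟩ t w ht hw
  set q := formDensity grad ι fun x => V₀ x + V₁ x
  have hΦq : ∀ z, Φ z = 1 / 2 * (∫ x, q z z x) - ∫ x, Fint f x (ι z x) := fun z => by
    simp only [q, hΦ, formDensity_self]
  have hNehari : ∀ v, Φ' u v = 0 → ∫ x, q u v x = ∫ x, f x (ι u x) * ι v x := fun v hv => by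
    have := hΦ'eq u v
    simp only [q, formDensity]
    linarith
  have hPw : Pm w = w ∧ Pp w = 0 := ⟨hPmId w hw, by simpa [hPmId w hw] using hPsum w⟩
  have hqw : ∫ x, q w w x = -‖w‖ ^ 2 + ∫ x, V₁ x * ι w x ^ 2 := by
    rw [integral_formDensity_add_potential (integrable_formDensity hmemg hintV w w) (hintV₁ w)]
    simp [formDensity_self, hform, hPw]
  have hF : (t ^ 2 - 1) / 2 * (∫ x, f x (ι u x) * ι u x) + t * (∫ x, f x (ι u x) * ι w x) +
      (∫ x, Fint f x (ι u x)) ≤ ∫ x, Fint f x (ι (t • u + w) x) := by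
    have hFtuw := hintF (t • u + w)
    simp only [map_add, map_smul, Pi.add_apply, Pi.smul_apply, smul_eq_mul] at hFtuw ⊢
    exact integral_primitive_affine_le (fun x => hfc.uncurry_left x)
      (fun x a ha b _ hab => hWN x a b hab (Or.inr ha))
      (fun x a _ b hb hab => hWN x a b hab (Or.inl hb)) (isLittleO_id_of_forall_abs_le hF1) ht
      (hintf u u) (hintf u w) (hintF u) hFtuw
  rw [hΦq, hΦq, integral_formDensity_smul_add_self hmemg hintV, hNehari u huu,
    hNehari w (huEm w hw), hqw]
  linarith

theorem energy_inequality_on_NehariPankov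
    {E : Type*} [NormedAddCommGroup E] [InnerProductSpace ℝ E] [CompleteSpace E]
    {N : ℕ} (hN : 3 ≤ N)
    -- `E = H¹(ℝᴺ)`, realized as a Hilbert space of functions on `ℝᴺ` via `ι`,
    -- with (weak) gradient `grad`
    (ι : E →ₗ[ℝ] (EuclideanSpace ℝ (Fin N) → ℝ)) (hι : Function.Injective ι)
    (grad : E →ₗ[ℝ] (EuclideanSpace ℝ (Fin N) → EuclideanSpace ℝ (Fin N)))
    (hmem2 : ∀ u : E, MemLp (ι u) 2 (volume : Measure (EuclideanSpace ℝ (Fin N))))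
    (hmemg : ∀ u : E, MemLp (fun x => ‖grad u x‖) 2 (volume : Measure (EuclideanSpace ℝ (Fin N))))
    -- the spectral decomposition of `E` into the negative and positive spectral
    -- subspaces of the Schrödinger operator, with the associated projections
    (Em Ep : Submodule ℝ E) (hEmc : IsClosed (Em : Set E)) (hEpc : IsClosed (Ep : Set E))
    (Pm Pp : E →L[ℝ] E)
    (hPm : ∀ u, Pm u ∈ Em) (hPp : ∀ u, Pp u ∈ Ep) (hPsum : ∀ u, Pm u + Pp u = u)
    (hPmId : ∀ u ∈ Em, Pm u = u) (hPpId : ∀ u ∈ Ep, Pp u = u)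
    (horth : ∀ v ∈ Em, ∀ w ∈ Ep, ⟪v, w⟫ = 0)
    -- (V0'): `V = V₀ + V₁`, `V₀` continuous and bounded, `V₁` continuous vanishing
    -- at infinity; the norm `‖·‖₀` of `E` is the form norm of `A₀ = -Δ + V₀`, whose
    -- quadratic form is positive on `Ep = E^{ℱ+}` and negative on `Em = E^{ℱ-}`
    (V₀ V₁ : EuclideanSpace ℝ (Fin N) → ℝ)
    (hV₀c : Continuous V₀) (hV₀b : ∃ M, ∀ x, |V₀ x| ≤ M) (hV₁c : Continuous V₁)
    (hV₁0 : Tendsto V₁ (cocompact (EuclideanSpace ℝ (Fin N))) (𝓝 0))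
    (hform : ∀ u : E,
      (∫ x, (‖grad u x‖ ^ 2 + V₀ x * (ι u x) ^ 2)) = ‖Pp u‖ ^ 2 - ‖Pm u‖ ^ 2)
    -- (F0) and (F1)
    (f : EuclideanSpace ℝ (Fin N) → ℝ → ℝ)
    (hfc : Continuous (Function.uncurry f))
    (p : ℝ) (hp1 : 2 < p) (hp2 : p < 2 * (N:ℝ) / ((N:ℝ) - 2))
    (hF0 : ∃ C₀ > 0, ∀ x t, |f x t| ≤ C₀ * (1 + |t| ^ (p - 1)))
    (hF1 : ∀ ε > 0, ∃ δ > 0, ∀ x t, |t| ≤ δ → |f x t| ≤ ε * |t|)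
    -- (WN): `t ↦ f(x,t)/|t|` is nondecreasing on `(-∞,0)` and on `(0,∞)`
    (hWN : ∀ (x : EuclideanSpace ℝ (Fin N)) (s₁ s₂ : ℝ),
      s₁ ≤ s₂ → (s₂ < 0 ∨ 0 < s₁) → f x s₁ / |s₁| ≤ f x s₂ / |s₂|)
    -- the energy functional `Φ` and its derivative `Φ'`
    (Φ : E → ℝ) (Φ' : E → E →L[ℝ] ℝ)
    (hΦ : ∀ u, Φ u = (1/2) * (∫ x, (‖grad u x‖ ^ 2 + (V₀ x + V₁ x) * (ι u x) ^ 2))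
        - ∫ x, Fint f x (ι u x))
    (hΦ'd : ∀ u, HasFDerivAt Φ (Φ' u) u)
    (hΦ'eq : ∀ u v, Φ' u v =
      (∫ x, (⟪grad u x, grad v x⟫ + (V₀ x + V₁ x) * (ι u x * ι v x)))
        - ∫ x, f x (ι u x) * ι v x)
    (hintF : ∀ u : E, Integrable (fun x => Fint f x (ι u x)))
    (hintV : ∀ u : E, Integrable (fun x => (V₀ x + V₁ x) * (ι u x) ^ 2))
    (hintf : ∀ u v : E, Integrable (fun x => f x (ι u x) * ι v x))
    (hintV₁ : ∀ u : E, Integrable (fun x => V₁ x * (ι u x) ^ 2))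
 :
    ∀ u ∈ {u : E | u ∉ Em ∧ Φ' u u = 0 ∧ ∀ v ∈ Em, Φ' u v = 0},
      ∀ (t : ℝ) (w : E), 0 ≤ t → w ∈ Em →
        Φ (t • u + w) + (1/2) * ‖w‖ ^ 2 - (1/2) * (∫ x, V₁ x * (ι w x) ^ 2) ≤ Φ u :=
  energy_inequality_on_NehariPankov_general ι grad hmemg Em Pm Pp hPsum hPmId V₀ V₁ hform f hfc hF1
    hWN Φ Φ' hΦ hΦ'eq hintF hintV hintf hintV₁
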